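/- arXiv:1809.04514 — 6 statements merged into one kernel-verified Lean document; each statement's English description precedes it below -/
import Mathlib

section
/- The extreme points of the matrix jewel base at level 1, D_{jewel,k}(1) = {x ∈ ℝ^{k-1} : for all ε ∈ [k], Σ_{j=1}^{k-1} v_j(ε) x_j ≤ 1}, where v_j(ε) = -2/k + 2δ_{ε,j}, are exactly the points x_i = -(k/2) e_i for i ∈ [k-1] together with x_k = (k/2)(1,…,1). -/
/-!
Write `k = n + 1`. The affine functions `λ_ε(x) = (1 - ∑ⱼ vⱼ(ε) xⱼ) / k` are barycentric
coordinates: every column of `v` sums to zero, so `∑_ε λ_ε = 1`, and `x` is recovered as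
`xⱼ = (k / 2) (λ_k(x) - λ_j(x))`. Thus `λ` is an affine injection onto the hyperplane
`∑ μ = 1` under which `D_{jewel,k}(1)` is the preimage of the standard simplex, and the
extreme points of `D_{jewel,k}(1)` are the preimages of the vertices of the simplex.
-/

open Set Function Matrix

section ExtremePoints

variable {𝕜 E F : Type*} [Ring 𝕜] [PartialOrder 𝕜] [IsOrderedRing 𝕜]
  [AddCommGroup E] [Module 𝕜 E] [AddCommGroup F] [Module 𝕜 F]

theorem AffineMap.extremePoints_preimage {f : E →ᵃ[𝕜] F} (hf : Injective f) {s : Set F}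
    (hs : s ⊆ range f) : extremePoints 𝕜 (f ⁻¹' s) = f ⁻¹' extremePoints 𝕜 s := by
  ext x
  simp only [mem_extremePoints, mem_preimage]
  refine and_congr_right fun _ => ⟨fun h y hy z hz hx => ?_, fun h y hy z hz hx => ?_⟩
  · obtain ⟨y, rfl⟩ := hs hy
    obtain ⟨z, rfl⟩ := hs hz
    rw [← image_openSegment, hf.mem_set_image] at hx
    obtain ⟨rfl, rfl⟩ := h y hy z hz hx
    exact ⟨rfl, rfl⟩
  · have hfx : f x ∈ openSegment 𝕜 (f y) (f z) :=
      image_openSegment 𝕜 f y z ▸ mem_image_of_mem f hx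
    exact (h (f y) hy (f z) hz hfx).imp (@hf _ _) (@hf _ _)

theorem extremePoints_stdSimplex {R ι : Type*} [Field R] [LinearOrder R] [IsStrictOrderedRing R]
    [Fintype ι] [DecidableEq ι] :
    extremePoints R (stdSimplex R ι) = range fun i => Pi.single i 1 := by
  refine Subset.antisymm ?_ ?_
  · rw [← convexHull_rangle_single_eq_stdSimplex]
    exact extremePoints_convexHull_subset
  rintro _ ⟨i, rfl⟩
  refine mem_extremePoints_iff_left.2 ⟨single_mem_stdSimplex R i, ?_⟩
  rintro y ⟨hy0, hy1⟩ z ⟨hz0, -⟩ ⟨a, b, ha, hb, -, hyz⟩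
  have hy_off : ∀ j ≠ i, y j = 0 := by
    intro j hj
    have hj' := congrFun hyz j
    simp only [Pi.add_apply, Pi.smul_apply, smul_eq_mul, Pi.single_eq_of_ne hj] at hj'
    nlinarith [hy0 j, hz0 j, mul_nonneg ha.le (hy0 j), mul_nonneg hb.le (hz0 j)]
  have hyi : y i = 1 := by rwa [Finset.sum_eq_single i (fun j _ => hy_off j) (by simp)] at hy1
  ext j
  obtain rfl | hj := eq_or_ne j i
  · simp [hyi]
  · simp [hy_off j hj, hj]

end ExtremePoints

section JewelBase

variable {n : ℕ}

variable (n) in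
noncomputable def jewelMatrix : Matrix (Fin (n + 1)) (Fin n) ℝ :=
  .of fun ε j => -(2 : ℝ) / ↑(n + 1) + if (ε : ℕ) = (j : ℕ) then 2 else 0

variable (n) in
def jewelBase : Set (Fin n → ℝ) := {x | ∀ ε, (jewelMatrix n *ᵥ x) ε ≤ 1}

theorem jewelMatrix_mulVec_castSucc (x : Fin n → ℝ) (i : Fin n) :
    (jewelMatrix n *ᵥ x) i.castSucc = -(2 / ↑(n + 1)) * ∑ j, x j + 2 * x i := by
  simp [jewelMatrix, mulVec, dotProduct, add_mul, Finset.sum_add_distrib, Finset.mul_sum,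
    Fin.val_eq_val, neg_div]

theorem jewelMatrix_mulVec_last (x : Fin n → ℝ) :
    (jewelMatrix n *ᵥ x) (Fin.last n) = -(2 / ↑(n + 1)) * ∑ j, x j := by
  simp [jewelMatrix, mulVec, dotProduct, Finset.mul_sum, Fin.val_last, neg_div, (Fin.is_lt _).ne']

theorem sum_jewelMatrix_apply (j : Fin n) : ∑ ε, jewelMatrix n ε j = 0 := by
  simp only [jewelMatrix, of_apply, Finset.sum_add_distrib]
  simp only [Finset.sum_const, Finset.card_univ, Fintype.card_fin, nsmul_eq_mul,
    Fin.sum_univ_castSucc, Fin.val_castSucc, Fin.val_eq_val, Finset.sum_ite_eq', Finset.mem_univ,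
    if_true, Fin.val_last, (Fin.is_lt _).ne', if_false, add_zero]
  field_simp
  ring

variable (n) in
noncomputable def jewelBary : (Fin n → ℝ) →ᵃ[ℝ] (Fin (n + 1) → ℝ) where
  toFun x := (↑(n + 1) : ℝ)⁻¹ • (1 - jewelMatrix n *ᵥ x)
  linear := -((↑(n + 1) : ℝ)⁻¹ • (jewelMatrix n).mulVecLin)
  map_vadd' x v := by
    ext ε
    simp only [vadd_eq_add, mulVec_add, Pi.smul_apply, Pi.sub_apply, Pi.one_apply, Pi.add_apply,
      smul_eq_mul, LinearMap.neg_apply, LinearMap.smul_apply, mulVecBilin_apply, Pi.vadd_apply',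
      Pi.neg_apply]
    ring

theorem jewelBary_apply (x : Fin n → ℝ) (ε : Fin (n + 1)) :
    jewelBary n x ε = (1 - (jewelMatrix n *ᵥ x) ε) / ↑(n + 1) := by
  simp [jewelBary, div_eq_inv_mul]

theorem sum_jewelBary (x : Fin n → ℝ) : ∑ ε, jewelBary n x ε = 1 := by
  have hcol : ∑ ε, (jewelMatrix n *ᵥ x) ε = 0 := by
    simp only [mulVec, dotProduct]
    rw [Finset.sum_comm]
    simp [← Finset.sum_mul, sum_jewelMatrix_apply]
  simp only [jewelBary_apply, ← Finset.sum_div, Finset.sum_sub_distrib, hcol]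
  simp [Nat.cast_add_one_ne_zero]

theorem preimage_jewelBary_stdSimplex :
    jewelBary n ⁻¹' stdSimplex ℝ (Fin (n + 1)) = jewelBase n := by
  ext x
  change (∀ ε, 0 ≤ jewelBary n x ε) ∧ ∑ ε, jewelBary n x ε = 1 ↔ ∀ ε, _
  rw [sum_jewelBary, eq_self_iff_true, and_true]
  refine forall_congr' fun ε => ?_
  rw [jewelBary_apply, le_div_iff₀ (Nat.cast_pos.2 n.succ_pos), zero_mul, sub_nonneg]

variable (n) in
noncomputable def jewelOfBary (μ : Fin (n + 1) → ℝ) : Fin n → ℝ :=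
  fun j => (↑(n + 1) / 2 : ℝ) * (μ (Fin.last n) - μ j.castSucc)

theorem jewelOfBary_jewelBary : LeftInverse (jewelOfBary n) (jewelBary n) := by
  intro x
  ext j
  simp only [jewelOfBary, jewelBary_apply, jewelMatrix_mulVec_last, jewelMatrix_mulVec_castSucc]
  field_simp
  ring

theorem jewelBary_jewelOfBary {μ : Fin (n + 1) → ℝ} (hμ : ∑ ε, μ ε = 1) :
    jewelBary n (jewelOfBary n μ) = μ := by
  have hsum :
      ∑ j, jewelOfBary n μ j = (↑(n + 1) / 2 : ℝ) * (↑(n + 1) * μ (Fin.last n) - 1) := by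
    rw [Fin.sum_univ_castSucc] at hμ
    simp only [jewelOfBary, ← Finset.mul_sum, Finset.sum_sub_distrib, Finset.sum_const,
      Finset.card_univ, Fintype.card_fin, nsmul_eq_mul]
    push_cast
    linear_combination -((n + 1) / 2 : ℝ) * hμ
  ext ε
  induction ε using Fin.lastCases with
  | last =>
    simp only [jewelBary_apply, jewelMatrix_mulVec_last, hsum]
    field_simp
    ring
  | cast i =>
    rw [jewelBary_apply, jewelMatrix_mulVec_castSucc, hsum]
    simp only [jewelOfBary]
    field_simp
    ring

theorem extremePoints_jewelBase :
    extremePoints ℝ (jewelBase n) = range fun ε => jewelOfBary n (Pi.single ε 1) := by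
  rw [← preimage_jewelBary_stdSimplex,
    AffineMap.extremePoints_preimage jewelOfBary_jewelBary.injective
      fun μ hμ => ⟨_, jewelBary_jewelOfBary hμ.2⟩,
    extremePoints_stdSimplex]
  ext x
  constructor
  · rintro ⟨ε, hε⟩
    exact ⟨ε, (congrArg (jewelOfBary n) hε).trans (jewelOfBary_jewelBary x)⟩
  · rintro ⟨ε, rfl⟩
    exact ⟨ε, (jewelBary_jewelOfBary (single_mem_stdSimplex ℝ ε).2).symm⟩

theorem jewelOfBary_single_castSucc (i : Fin n) :
    jewelOfBary n (Pi.single i.castSucc 1) =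
      fun j => if j = i then -((↑(n + 1) : ℝ) / 2) else 0 := by
  ext j
  obtain rfl | hj := eq_or_ne j i
  · simp [jewelOfBary, Fin.castSucc_ne_last]
  · simp [jewelOfBary, Fin.castSucc_ne_last, hj]

theorem jewelOfBary_single_last :
    jewelOfBary n (Pi.single (Fin.last n) 1) = fun _ => (↑(n + 1) : ℝ) / 2 := by
  ext j
  simp [jewelOfBary, Fin.castSucc_ne_last]

end JewelBase

/-- The extreme points of the matrix jewel base at level 1,
`D_{jewel,k}(1) = {x ∈ ℝ^{k-1} : ∀ ε ∈ [k], ∑_j v_j(ε) x_j ≤ 1}` with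
`v_j(ε) = -2/k + 2δ_{ε,j}`, are exactly `-(k/2)iₑ` for `i ∈ [k-1]` together with
`(k/2)(1,…,1)`. -/
theorem stmt_3 (k : ℕ) (hk : 2 ≤ k) :
    Set.extremePoints ℝ
        {x : Fin (k - 1) → ℝ |
          ∀ ε : Fin k, ∑ j : Fin (k - 1), (-(2 : ℝ) / k + if (ε : ℕ) = (j : ℕ) then 2 else 0) * x j ≤ 1}
      = (Set.range fun i : Fin (k - 1) =>
          (fun j => if j = i then -((k : ℝ) / 2) else 0 : Fin (k - 1) → ℝ))
        ∪ {fun _ => (k : ℝ) / 2} := by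
  obtain ⟨n, rfl⟩ : ∃ n, k = n + 1 := ⟨k - 1, by omega⟩
  refine (extremePoints_jewelBase (n := n)).trans ?_
  ext x
  simp only [mem_range, mem_union, mem_singleton_iff, Fin.exists_fin_succ',
    jewelOfBary_single_castSucc, jewelOfBary_single_last]
  exact or_congr_right eq_comm
end

section
/- A collection of POVMs E^{(1)}, …, E^{(g)} on ℂ^d is jointly measurable if and only if there exist m ∈ ℕ, a POVM M = (M_1, …, M_m) on ℂ^d, and conditional probabilities p_i(j|x) (i.e., p_i(j|x) ≥ 0 and Σ_j p_i(j|x) = 1 for each i, x) such that E^{(i)}_j = Σ_{x=1}^m p_i(j|x) M_x for all i ∈ [g] and j ∈ [k_i]. -/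
open Matrix Finset
open scoped ComplexOrder

/-!
A joint POVM `G` is itself a POVM, and each `E i` is obtained from it by the deterministic
post-processing `p i j η = [η i = j]`. Conversely, from `M` and conditional probabilities `p`
the joint POVM `G η = ∑ₓ (∏ᵢ p i (η i) x) • M x` works: for each fixed `x` the weights
`η ↦ ∏ᵢ p i (η i) x` form a product probability distribution on outcome tuples whose
`i`-th marginal is `p i · x`.
-/

section ProductDistribution

variable {ι : Type*} [Fintype ι] [DecidableEq ι] {κ : ι → Type*} [∀ i, Fintype (κ i)]
  {R : Type*} [CommSemiring R]

theorem sum_prod_apply_eq_one {f : ∀ i, κ i → R} (hf : ∀ i, ∑ j, f i j = 1) :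
    ∑ η : ∀ i, κ i, ∏ i, f i (η i) = 1 := by
  rw [← Fintype.prod_sum]
  exact prod_eq_one fun i _ => hf i

theorem sum_prod_filter_apply_eq [∀ i, DecidableEq (κ i)] {f : ∀ i, κ i → R}
    (hf : ∀ i, ∑ j, f i j = 1) (u : ι) (v : κ u) :
    ∑ η ∈ univ.filter (fun η : ∀ i, κ i => η u = v), ∏ i, f i (η i) = f u v := by
  have hslice : univ.filter (fun η : ∀ i, κ i => η u = v) =
      Fintype.piFinset (Function.update (fun _ => univ) u {v}) := by
    rw [Fintype.piFinset_update_singleton_eq_filter_piFinset_eq (fun _ => univ) u (mem_univ v),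
      Fintype.piFinset_univ]
  rw [hslice, ← prod_univ_sum, Fintype.prod_eq_single u]
  · simp
  · intro i hi
    simp [Function.update_of_ne hi, hf]

end ProductDistribution

/-- A family `E` of POVMs on `ℂ^d` (the `i`-th having `k i` outcomes) is jointly
measurable if there is a joint POVM `G` indexed by outcome tuples whose marginals
are the `E i`. -/
def JointlyMeasurable {d g : ℕ} (k : Fin g → ℕ)
    (E : ∀ i : Fin g, Fin (k i) → Matrix (Fin d) (Fin d) ℂ) : Prop :=
  ∃ G : (∀ i : Fin g, Fin (k i)) → Matrix (Fin d) (Fin d) ℂ,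
    (∀ η, (G η).PosSemidef) ∧ (∑ η, G η = 1) ∧
      ∀ (u : Fin g) (v : Fin (k u)),
        E u v = ∑ η ∈ Finset.univ.filter (fun η : ∀ i : Fin g, Fin (k i) => η u = v), G η

section JointMeasurability

variable {d g : ℕ} {k : Fin g → ℕ} {E : ∀ i : Fin g, Fin (k i) → Matrix (Fin d) (Fin d) ℂ}

theorem JointlyMeasurable.exists_postprocessing (hE : JointlyMeasurable k E) :
    ∃ (m : ℕ) (M : Fin m → Matrix (Fin d) (Fin d) ℂ),
      (∀ x, (M x).PosSemidef) ∧ (∑ x, M x = 1) ∧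
        ∃ p : (i : Fin g) → Fin (k i) → Fin m → ℝ,
          (∀ i x, (∀ j, 0 ≤ p i j x) ∧ ∑ j, p i j x = 1) ∧
            ∀ i j, E i j = ∑ x, (p i j x : ℂ) • M x := by
  obtain ⟨G, hG_psd, hG_sum, hG_marginal⟩ := hE
  let e := (Fintype.equivFin (∀ i : Fin g, Fin (k i))).symm
  refine ⟨_, G ∘ e, fun x => hG_psd _, by rw [← hG_sum]; exact e.sum_comp G, ?_⟩
  refine ⟨fun i j x => if e x i = j then 1 else 0,
    fun i x => ⟨fun j => by positivity, by simp⟩, fun i j => ?_⟩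
  rw [hG_marginal i j, sum_filter, ← e.sum_comp]
  refine sum_congr rfl fun x _ => ?_
  by_cases h : e x i = j <;> simp [h]

theorem jointlyMeasurable_of_postprocessing {α : Type*} [Fintype α]
    {M : α → Matrix (Fin d) (Fin d) ℂ} (hM_psd : ∀ x, (M x).PosSemidef) (hM_sum : ∑ x, M x = 1)
    {p : (i : Fin g) → Fin (k i) → α → ℝ} (hp_nonneg : ∀ i j x, 0 ≤ p i j x)
    (hp_sum : ∀ i x, ∑ j, p i j x = 1) (hE : ∀ i j, E i j = ∑ x, (p i j x : ℂ) • M x) :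
    JointlyMeasurable k E := by
  have hp_sum' : ∀ x i, ∑ j, (p i j x : ℂ) = 1 := fun x i => by exact_mod_cast hp_sum i x
  refine ⟨fun η => ∑ x, (∏ i, (p i (η i) x : ℂ)) • M x, fun η => ?_, ?_, fun u v => ?_⟩
  · refine posSemidef_sum _ fun x _ => (hM_psd x).smul ?_
    exact_mod_cast prod_nonneg fun i _ => hp_nonneg i (η i) x
  · rw [sum_comm]
    simp_rw [← sum_smul, sum_prod_apply_eq_one (hp_sum' _), one_smul, hM_sum]
  · rw [hE, sum_comm]
    simp_rw [← sum_smul, sum_prod_filter_apply_eq (hp_sum' _)]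

end JointMeasurability

theorem stmt_6_general {d g : ℕ} (k : Fin g → ℕ)
    (E : ∀ i : Fin g, Fin (k i) → Matrix (Fin d) (Fin d) ℂ) :
    JointlyMeasurable k E ↔
      ∃ (m : ℕ) (M : Fin m → Matrix (Fin d) (Fin d) ℂ),
        (∀ x, (M x).PosSemidef) ∧ (∑ x, M x = 1) ∧
          ∃ p : (i : Fin g) → Fin (k i) → Fin m → ℝ,
            (∀ i x, (∀ j, 0 ≤ p i j x) ∧ ∑ j, p i j x = 1) ∧
              ∀ i j, E i j = ∑ x, (p i j x : ℂ) • M x := by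
  refine ⟨JointlyMeasurable.exists_postprocessing, ?_⟩
  rintro ⟨m, M, hM_psd, hM_sum, p, hp, hE⟩
  exact jointlyMeasurable_of_postprocessing hM_psd hM_sum (fun i j x => (hp i x).1 j)
    (fun i x => (hp i x).2) hE

/-- Joint measurability is equivalent to arising via post-processing (classical
conditional probabilities) from a single common POVM. -/
theorem stmt_6 {d g : ℕ} (k : Fin g → ℕ)
    (E : ∀ i : Fin g, Fin (k i) → Matrix (Fin d) (Fin d) ℂ)
    (hE : ∀ i, (∀ j, (E i j).PosSemidef) ∧ ∑ j, E i j = 1) :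
    JointlyMeasurable k E ↔
      ∃ (m : ℕ) (M : Fin m → Matrix (Fin d) (Fin d) ℂ),
        (∀ x, (M x).PosSemidef) ∧ (∑ x, M x = 1) ∧
          ∃ p : (i : Fin g) → Fin (k i) → Fin m → ℝ,
            (∀ i x, (∀ j, 0 ≤ p i j x) ∧ ∑ j, p i j x = 1) ∧
              ∀ i j, E i j = ∑ x, (p i j x : ℂ) • M x :=
  stmt_6_general k E
end

section
/- Let k, k' be g-tuples of positive integers with k'_i ≥ k_i for all i. Then the balanced compatibility region satisfies Γ(g,d,k') ⊆ Γ(g,d,k): if s ∈ [0,1]^g is such that for all g-tuples of d-dimensional POVMs with k'_i outcomes the noisy POVMs s_i E^{(i)} + (1-s_i) I/k'_i are jointly measurable, then for all g-tuples of d-dimensional POVMs with k_i outcomes the noisy POVMs s_i E^{(i)} + (1-s_i) I/k_i are jointly measurable. -/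
open Matrix
open scoped ComplexOrder

/-!
Pad each POVM `E i` with `k' i - k i` zero effects. By hypothesis the noisy padded POVMs are
jointly measurable. Post-process each of them classically: keep an outcome `j < k i`, and replace
an outcome `j ≥ k i` by an outcome drawn uniformly from `Fin (k i)`. Classical post-processing
preserves joint measurability (apply the product of the channels to the joint POVM), and this
channel maps `s • Eᵢⱼ + (1 - s)/k'ᵢ • 1` to `s • Eᵢⱼ + (1 - s)/kᵢ • 1`,
since the `k'ᵢ - kᵢ` extra outcomes carry exactly the missing weight of the noise.
-/

open Finset

theorem Fintype.sum_filter_prod_eq_of_sum_eq_one {ι R : Type*} [Fintype ι] [DecidableEq ι]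
    [CommSemiring R] {β : ι → Type*} [∀ i, Fintype (β i)] [∀ i, DecidableEq (β i)]
    (f : ∀ i, β i → R) (hf : ∀ i, ∑ b, f i b = 1) (u : ι) (v : β u) :
    ∑ η ∈ univ.filter (fun η : ∀ i, β i => η u = v), ∏ i, f i (η i) = f u v := by
  rw [← Fintype.piFinset_univ,
    ← Fintype.piFinset_update_singleton_eq_filter_piFinset_eq (fun _ => univ) u (mem_univ v),
    ← Finset.prod_univ_sum]
  simp_rw [Function.apply_update (fun i (s : Finset (β i)) => ∑ b ∈ s, f i b), hf]
  simp [Finset.prod_update_of_mem]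

theorem JointlyMeasurable.postprocess {d g : ℕ} {m n : Fin g → ℕ}
    {E : ∀ i, Fin (m i) → Matrix (Fin d) (Fin d) ℂ} (hE : JointlyMeasurable m E)
    (q : ∀ i, Fin (n i) → Fin (m i) → ℝ) (hq_nonneg : ∀ i v w, 0 ≤ q i v w)
    (hq_sum : ∀ i w, ∑ v, q i v w = 1) :
    JointlyMeasurable n (fun i v => ∑ w, q i v w • E i w) := by
  obtain ⟨G, hG_psd, hG_sum, hG_marg⟩ := hE
  refine ⟨fun η => ∑ η', (∏ i, q i (η i) (η' i)) • G η', fun η => ?_, ?_, fun u v => ?_⟩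
  · exact posSemidef_sum _ fun η' _ =>
      (hG_psd η').smul (prod_nonneg fun i _ => hq_nonneg i (η i) (η' i))
  · rw [sum_comm]
    refine (sum_congr rfl fun η' _ => ?_).trans hG_sum
    rw [← sum_smul, ← Fintype.prod_sum fun i v => q i v (η' i)]
    simp [hq_sum]
  · calc ∑ w, q u v w • E u w
        = ∑ w, ∑ η' ∈ univ.filter (fun η' : ∀ i, Fin (m i) => η' u = w),
            q u v (η' u) • G η' := by
          refine sum_congr rfl fun w _ => ?_
          rw [hG_marg, smul_sum]
          exact sum_congr rfl fun η' hη' => by rw [(mem_filter.mp hη').2]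
      _ = ∑ η', q u v (η' u) • G η' := sum_fiberwise _ _ _
      _ = _ := by
          rw [sum_comm]
          refine sum_congr rfl fun η' _ => ?_
          rw [← sum_smul, Fintype.sum_filter_prod_eq_of_sum_eq_one (fun i v => q i v (η' i))
            (fun i => hq_sum i _)]

def IsPOVM {d k : ℕ} (E : Fin k → Matrix (Fin d) (Fin d) ℂ) : Prop :=
  (∀ j, (E j).PosSemidef) ∧ ∑ j, E j = 1

theorem IsPOVM.append_zero {d k r : ℕ} {E : Fin k → Matrix (Fin d) (Fin d) ℂ} (hE : IsPOVM E) :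
    IsPOVM (Fin.append E (0 : Fin r → _)) := by
  refine ⟨fun j => ?_, by simpa [Fin.sum_univ_add] using hE.2⟩
  induction j using Fin.addCases with
  | left u => simpa using hE.1 u
  | right u => simpa using PosSemidef.zero

/-- Probability of reporting `v` when the padded POVM gives outcome `w`. -/
noncomputable def tailUniformKernel (k r : ℕ) (v : Fin k) : Fin (k + r) → ℝ :=
  Fin.append (Pi.single v 1) fun _ => (k : ℝ)⁻¹

theorem tailUniformKernel_nonneg {k r : ℕ} (v : Fin k) (w : Fin (k + r)) :
    0 ≤ tailUniformKernel k r v w := by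
  induction w using Fin.addCases with
  | left u =>
    simp only [tailUniformKernel, Fin.append_left, Pi.single_apply]
    split_ifs <;> norm_num
  | right u => simp [tailUniformKernel]

theorem sum_tailUniformKernel {k r : ℕ} (hk : 0 < k) (w : Fin (k + r)) :
    ∑ v, tailUniformKernel k r v w = 1 := by
  induction w using Fin.addCases with
  | left u => simp [tailUniformKernel, Pi.single_apply]
  | right u => simp [tailUniformKernel, hk.ne']

theorem sum_tailUniformKernel_smul_noisy {d k r : ℕ} (hk : 0 < k)
    (E : Fin k → Matrix (Fin d) (Fin d) ℂ) (s : ℝ) (v : Fin k) :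
    ∑ w, tailUniformKernel k r v w •
        ((s : ℂ) • Fin.append E (0 : Fin r → _) w + (((1 - s) / (k + r : ℕ) : ℝ) : ℂ) • 1) =
      (s : ℂ) • E v + (((1 - s) / k : ℝ) : ℂ) • 1 := by
  rw [Fin.sum_univ_add]
  simp only [tailUniformKernel, Fin.append_left, Fin.append_right, Fintype.sum_single_smul,
    one_smul, Pi.zero_apply, smul_zero, zero_add, sum_const, card_univ, Fintype.card_fin]
  rw [add_assoc, ← Nat.cast_smul_eq_nsmul ℂ, ← Complex.coe_smul, smul_smul, smul_smul, ← add_smul]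
  congr 2
  push_cast
  field_simp

theorem stmt_7_general {d g : ℕ} (k k' : Fin g → ℕ) (hk : ∀ i, 0 < k i) (hkk' : ∀ i, k i ≤ k' i)
    (s : Fin g → ℝ)
    (h : ∀ E : ∀ i : Fin g, Fin (k' i) → Matrix (Fin d) (Fin d) ℂ,
      (∀ i, (∀ j, (E i j).PosSemidef) ∧ ∑ j, E i j = 1) →
      JointlyMeasurable k'
        (fun i j => (s i : ℂ) • E i j + (((1 - s i) / (k' i) : ℝ) : ℂ) • 1)) :
    ∀ E : ∀ i : Fin g, Fin (k i) → Matrix (Fin d) (Fin d) ℂ,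
      (∀ i, (∀ j, (E i j).PosSemidef) ∧ ∑ j, E i j = 1) →
      JointlyMeasurable k
        (fun i j => (s i : ℂ) • E i j + (((1 - s i) / (k i) : ℝ) : ℂ) • 1) := by
  intro E hE
  obtain ⟨r, rfl⟩ : ∃ r : Fin g → ℕ, k' = fun i => k i + r i :=
    ⟨fun i => k' i - k i, funext fun i => (Nat.add_sub_cancel' (hkk' i)).symm⟩
  have hpadded := h (fun i => Fin.append (E i) 0) fun i => IsPOVM.append_zero (hE i)
  simpa only [sum_tailUniformKernel_smul_noisy (hk _)] using
    hpadded.postprocess (fun i => tailUniformKernel (k i) (r i))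
      (fun _ => tailUniformKernel_nonneg) (fun i => sum_tailUniformKernel (hk i))

/-- Monotonicity of the balanced compatibility region in the outcome numbers:
`Γ(g,d,k') ⊆ Γ(g,d,k)` whenever `k'ᵢ ≥ kᵢ` for all `i`. -/
theorem stmt_7 {d g : ℕ} (k k' : Fin g → ℕ) (hk : ∀ i, 0 < k i) (hkk' : ∀ i, k i ≤ k' i)
    (s : Fin g → ℝ) (hs : ∀ i, s i ∈ Set.Icc (0 : ℝ) 1)
    (h : ∀ E : ∀ i : Fin g, Fin (k' i) → Matrix (Fin d) (Fin d) ℂ,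
      (∀ i, (∀ j, (E i j).PosSemidef) ∧ ∑ j, E i j = 1) →
      JointlyMeasurable k'
        (fun i j => (s i : ℂ) • E i j + (((1 - s i) / (k' i) : ℝ) : ℂ) • 1)) :
    ∀ E : ∀ i : Fin g, Fin (k i) → Matrix (Fin d) (Fin d) ℂ,
      (∀ i, (∀ j, (E i j).PosSemidef) ∧ ∑ j, E i j = 1) →
      JointlyMeasurable k
        (fun i j => (s i : ℂ) • E i j + (((1 - s i) / (k i) : ℝ) : ℂ) • 1) :=
  stmt_7_general k k' hk hkk' s h
end

section
/- Let ω = exp(πi/g) be a primitive 2g-th root of unity. Then max over subsets J ⊆ [2g] of |Σ_{j∈J} ω^j| is attained by a subset J_0 of cardinality g consisting of g consecutive powers, and the maximum value equals 2/|1-ω| = 1/sin(π/(2g)). -/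
/-!
Rotate a partial sum `S = ∑_{j ∈ J} ω^j` by `e^{-i arg S}` so that it becomes real. Since the
`2g` powers of `ω` sum to zero, `2‖S‖` is at most `∑_j |cos(πj/g + φ)|` for some angle `φ`.
Multiplying the `j`-th term by `2 sin(π/2g)` gives `|sin(c + h) - sin(c - h)|` with
`c = πj/g + φ`, `h = π/2g`, which is at most `∫_{c-h}^{c+h} |cos|`; these windows tile one period
of `cos`, over which `|cos|` integrates to `4`. Hence `‖S‖ ≤ 1/sin(π/2g)`, and the bound is attained
by `ω + ⋯ + ω^g = 2ω/(1 - ω)`, because `ω^g = -1`.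
-/

open Finset Real

theorem integral_abs_cos_add_pi (a : ℝ) : ∫ t in a..a + π, |cos t| = 2 := by
  have hper : Function.Periodic (fun t => |cos t|) π := fun t => by simp [cos_add_pi]
  have hcos : Set.EqOn (fun t => |cos t|) cos (Set.uIcc (-(π / 2)) (π / 2)) := fun t ht => by
    rw [Set.uIcc_of_le (by linarith [pi_pos])] at ht
    exact abs_of_nonneg (cos_nonneg_of_mem_Icc ht)
  rw [hper.intervalIntegral_add_eq a (-(π / 2)), show -(π / 2) + π = π / 2 by ring,
    intervalIntegral.integral_congr hcos, integral_cos]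
  norm_num

theorem integral_abs_cos_add_two_pi (a : ℝ) : ∫ t in a..a + 2 * π, |cos t| = 4 := by
  have hint (u v : ℝ) : IntervalIntegrable (fun t => |cos t|) MeasureTheory.volume u v :=
    continuous_cos.abs.intervalIntegrable u v
  rw [← intervalIntegral.integral_add_adjacent_intervals (hint a (a + π)) (hint _ _),
    integral_abs_cos_add_pi, show a + 2 * π = a + π + π by ring, integral_abs_cos_add_pi]
  norm_num

theorem abs_cos_mul_abs_two_sin_le_integral (c : ℝ) {h : ℝ} (hh : 0 ≤ h) :
    |cos c| * |2 * sin h| ≤ ∫ t in c - h..c + h, |cos t| :=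
  calc |cos c| * |2 * sin h| = |∫ t in c - h..c + h, cos t| := by
        rw [← abs_mul, integral_cos, sin_add, sin_sub]; congr 1; ring
    _ ≤ ∫ t in c - h..c + h, |cos t| := intervalIntegral.abs_integral_le_integral_abs (by linarith)

theorem sum_abs_cos_mul_abs_two_sin_le_integral (a : ℝ) {h : ℝ} (hh : 0 ≤ h) (N : ℕ) :
    (∑ k ∈ range N, |cos (a + 2 * h * k)|) * |2 * sin h|
      ≤ ∫ t in a - h..a - h + 2 * h * N, |cos t| := by
  have hint (u v : ℝ) : IntervalIntegrable (fun t => |cos t|) MeasureTheory.volume u v :=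
    continuous_cos.abs.intervalIntegrable u v
  calc (∑ k ∈ range N, |cos (a + 2 * h * k)|) * |2 * sin h|
      ≤ ∑ k ∈ range N, ∫ t in a - h + 2 * h * k..a - h + 2 * h * (k + 1 : ℕ), |cos t| := by
        rw [sum_mul]
        refine sum_le_sum fun k _ => ?_
        refine (abs_cos_mul_abs_two_sin_le_integral (a + 2 * h * k) hh).trans_eq ?_
        congr 1 <;> push_cast <;> ring
    _ = ∫ t in a - h..a - h + 2 * h * N, |cos t| := by
        rw [intervalIntegral.sum_integral_adjacent_intervals (a := fun k : ℕ => a - h + 2 * h * k)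
          fun k _ => hint _ _]
        simp

theorem sum_Icc_one_eq_sum_range {M : Type*} [AddCommMonoid M] (f : ℕ → M) (n : ℕ) :
    ∑ j ∈ Icc 1 n, f j = ∑ k ∈ range n, f (k + 1) := by
  rw [← Ico_add_one_right_eq_Icc, sum_Ico_eq_sum_range, Nat.add_sub_cancel]
  simp only [add_comm]

theorem sin_pi_div_two_mul_pos {g : ℕ} (hg : 1 ≤ g) : 0 < sin (π / (2 * g)) := by
  have hg1 : (1 : ℝ) ≤ g := by exact_mod_cast hg
  refine sin_pos_of_pos_of_lt_pi (by positivity) ?_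
  rw [div_lt_iff₀ (by positivity)]
  nlinarith [pi_pos]

theorem sum_abs_cos_pi_mul_div_add_le {g : ℕ} (hg : 1 ≤ g) (φ : ℝ) :
    ∑ j ∈ Icc 1 (2 * g), |cos (π * j / g + φ)| ≤ 2 / sin (π / (2 * g)) := by
  have hsin := sin_pi_div_two_mul_pos hg
  set h := π / (2 * g) with hh
  have hbound := sum_abs_cos_mul_abs_two_sin_le_integral (π / g + φ) (h := h) (by positivity) (2 * g)
  rw [show π / g + φ - h + 2 * h * (2 * g : ℕ) = π / g + φ - h + 2 * π by
      rw [hh]; push_cast; field_simp, integral_abs_cos_add_two_pi,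
    abs_of_pos (by positivity)] at hbound
  have hsum : ∑ j ∈ Icc 1 (2 * g), |cos (π * j / g + φ)|
      = ∑ k ∈ range (2 * g), |cos (π / g + φ + 2 * h * k)| := by
    rw [sum_Icc_one_eq_sum_range]
    refine sum_congr rfl fun k _ => ?_
    rw [hh]; push_cast; field_simp; ring_nf
  rw [hsum, le_div_iff₀ hsin]
  linarith

theorem exists_two_mul_norm_sum_le_sum_abs_re {ι : Type*} {s J : Finset ι} (hJ : J ⊆ s)
    {z : ι → ℂ} (hz : ∑ i ∈ s, z i = 0) :
    ∃ φ : ℝ, 2 * ‖∑ i ∈ J, z i‖ ≤ ∑ i ∈ s, |(z i * Complex.exp (φ * Complex.I)).re| := by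
  set S := ∑ i ∈ J, z i
  set φ := -Complex.arg S
  set x : ι → ℝ := fun i => (z i * Complex.exp (φ * Complex.I)).re
  refine ⟨φ, ?_⟩
  have hrot : S * Complex.exp (φ * Complex.I) = ‖S‖ := by
    nth_rewrite 1 [← Complex.norm_mul_exp_arg_mul_I S]
    rw [mul_assoc, ← Complex.exp_add]
    simp [φ]
  have hnorm : ‖S‖ = ∑ i ∈ J, x i := by
    rw [← Complex.re_sum, ← sum_mul, hrot, Complex.ofReal_re]
  have hzero : ∑ i ∈ s, x i = 0 := by
    rw [← Complex.re_sum, ← sum_mul, hz, zero_mul, Complex.zero_re]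
  calc 2 * ‖S‖ = 2 * ∑ i ∈ J, x i := by rw [hnorm]
    _ ≤ 2 * ∑ i ∈ s, (x i)⁺ := by
        gcongr
        exact (sum_le_sum fun i _ => le_posPart (x i)).trans
          (sum_le_sum_of_subset_of_nonneg hJ fun i _ _ => posPart_nonneg (x i))
    _ = ∑ i ∈ s, |x i| := by
        rw [← sub_zero (2 * _), ← hzero, mul_sum, ← sum_sub_distrib]
        refine sum_congr rfl fun i _ => ?_
        linarith [posPart_add_negPart (x i), posPart_sub_negPart (x i)]

theorem re_exp_pi_mul_I_div_pow_mul_exp (g j : ℕ) (φ : ℝ) :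
    (Complex.exp (π * Complex.I / g) ^ j * Complex.exp (φ * Complex.I)).re
      = cos (π * j / g + φ) := by
  rw [← Complex.exp_nat_mul, ← Complex.exp_add, ← Complex.exp_ofReal_mul_I_re]
  congr 3
  push_cast
  ring

theorem isPrimitiveRoot_exp_pi_mul_I_div {g : ℕ} (hg : g ≠ 0) :
    IsPrimitiveRoot (Complex.exp (π * Complex.I / g)) (2 * g) := by
  convert Complex.isPrimitiveRoot_exp (2 * g) (by omega) using 2
  push_cast
  field_simp

theorem norm_one_sub_exp_pi_mul_I_div {g : ℕ} (hg : 1 ≤ g) :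
    ‖1 - Complex.exp (π * Complex.I / g)‖ = 2 * sin (π / (2 * g)) := by
  rw [norm_sub_rev, show π * Complex.I / g = Complex.I * (π / g : ℝ) by push_cast; ring,
    Complex.norm_exp_I_mul_ofReal_sub_one, div_div, mul_comm (g : ℝ), Real.norm_eq_abs,
    abs_of_pos (mul_pos two_pos (sin_pi_div_two_mul_pos hg))]

theorem IsPrimitiveRoot.sum_Icc_one_pow_eq_zero {ζ : ℂ} {n : ℕ} (hζ : IsPrimitiveRoot ζ n)
    (hn : 1 < n) : ∑ j ∈ Icc 1 n, ζ ^ j = 0 := by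
  simp only [sum_Icc_one_eq_sum_range, pow_succ, ← sum_mul, hζ.geom_sum_eq_zero hn, zero_mul]

theorem norm_sum_range_pow_succ_of_pow_eq_neg_one {ζ : ℂ} (hζ : ‖ζ‖ = 1) {g : ℕ}
    (hg : ζ ^ g = -1) : ‖∑ t ∈ range g, ζ ^ (t + 1)‖ = 2 / ‖1 - ζ‖ := by
  have hζ1 : ζ ≠ 1 := by rintro rfl; norm_num at hg
  have hsum : ∑ t ∈ range g, ζ ^ (t + 1) = 2 * ζ / (1 - ζ) := by
    have h1 : 1 - ζ ≠ 0 := sub_ne_zero.2 hζ1.symm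
    have h2 : ζ - 1 ≠ 0 := sub_ne_zero.2 hζ1
    simp only [pow_succ, ← sum_mul]
    rw [geom_sum_eq hζ1, hg]
    field_simp
    ring
  rw [hsum, norm_div, norm_mul, hζ, Complex.norm_two, mul_one]

theorem norm_sum_exp_pi_mul_I_div_pow_le {g : ℕ} (hg : 1 ≤ g) {J : Finset ℕ}
    (hJ : J ⊆ Icc 1 (2 * g)) :
    ‖∑ j ∈ J, Complex.exp (π * Complex.I / g) ^ j‖ ≤ 1 / sin (π / (2 * g)) := by
  have hω := isPrimitiveRoot_exp_pi_mul_I_div (show g ≠ 0 by omega)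
  obtain ⟨φ, hφ⟩ := exists_two_mul_norm_sum_le_sum_abs_re hJ (hω.sum_Icc_one_pow_eq_zero (by omega))
  simp only [re_exp_pi_mul_I_div_pow_mul_exp] at hφ
  have := hφ.trans (sum_abs_cos_pi_mul_div_add_le hg φ)
  rw [le_div_iff₀ (sin_pi_div_two_mul_pos hg)] at this ⊢
  linarith

/-- For `ω = exp(πi/g)` a primitive `2g`-th root of unity, the maximum over subsets
`J ⊆ [2g]` of `|∑_{j∈J} ω^j|` is attained by a subset `J₀` of cardinality `g`
consisting of `g` consecutive powers, and the maximum equals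
`2/|1-ω| = 1/sin(π/(2g))`. -/
theorem stmt_13 (g : ℕ) (hg : 1 ≤ g) :
    ∃ J₀ ⊆ Finset.Icc 1 (2 * g), J₀.card = g ∧
      (∃ a : ℕ, J₀ = (Finset.range g).image (fun t => a + 1 + t)) ∧
      ‖∑ j ∈ J₀, Complex.exp ((Real.pi : ℂ) * Complex.I / (g : ℂ)) ^ j‖
          = 1 / Real.sin (Real.pi / (2 * g)) ∧
      (1 : ℝ) / Real.sin (Real.pi / (2 * g))
          = 2 / ‖1 - Complex.exp ((Real.pi : ℂ) * Complex.I / (g : ℂ))‖ ∧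
      ∀ J ⊆ Finset.Icc 1 (2 * g),
        ‖∑ j ∈ J, Complex.exp ((Real.pi : ℂ) * Complex.I / (g : ℂ)) ^ j‖
          ≤ 1 / Real.sin (Real.pi / (2 * g)) := by
  have hg0 : g ≠ 0 := by omega
  have hω := isPrimitiveRoot_exp_pi_mul_I_div hg0
  have hω_pow_g : Complex.exp (π * Complex.I / g) ^ g = -1 := by
    have := hω.pow_of_dvd hg0 (dvd_mul_left g 2)
    rw [Nat.mul_div_cancel _ (by omega)] at this
    exact this.eq_neg_one_of_two_right
  have hinj : Function.Injective fun t : ℕ => 0 + 1 + t := fun _ _ h => by simpa using h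
  refine ⟨(range g).image fun t => 0 + 1 + t, fun j hj => ?_, ?_, ⟨0, rfl⟩, ?_, ?_, fun J hJ => ?_⟩
  · obtain ⟨t, ht, rfl⟩ := mem_image.1 hj
    rw [mem_range] at ht
    rw [mem_Icc]
    omega
  · rw [card_image_of_injective _ hinj, card_range]
  · rw [sum_image fun _ _ _ _ h => hinj h]
    simp only [zero_add, add_comm 1]
    rw [norm_sum_range_pow_succ_of_pow_eq_neg_one (hω.norm'_eq_one (by omega)) hω_pow_g,
      norm_one_sub_exp_pi_mul_I_div hg]
    field_simp
  · rw [norm_one_sub_exp_pi_mul_I_div hg]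
    field_simp
  · exact norm_sum_exp_pi_mul_I_div_pow_le hg hJ
end

section
/- Let E_1, …, E_g be d×d quantum effects that are jointly measurable, with joint POVM {G_η}_{η ∈ {0,1}^g}. Then for every g-tuple (X_1, …, X_g) of self-adjoint n×n matrices satisfying Σ_{i=1}^g ε_i X_i ≤ I_n for all sign vectors ε ∈ {±1}^g, it holds that Σ_{i=1}^g (2E_i - I_d) ⊗ X_i ≤ I_{dn}. -/
open Matrix Kronecker Finset
open scoped ComplexOrder

/-! Write `εη ∈ {±1}^g` for the sign vector of an outcome `η` of the joint POVM. Then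
`2Eᵢ - I = ∑_η εηᵢ Gη`, and with `∑_η Gη = I` this turns `I - ∑ᵢ (2Eᵢ - I) ⊗ Xᵢ` into
`∑_η Gη ⊗ (I - ∑ᵢ εηᵢ Xᵢ)`, a sum of Kronecker products of positive semidefinite matrices. -/

def signVector {ι : Type*} (η : ι → Fin 2) : ι → ℝ := fun i => if η i = 0 then 1 else -1

lemma signVector_eq_one_or_neg_one {ι : Type*} (η : ι → Fin 2) (i : ι) :
    signVector η i = 1 ∨ signVector η i = -1 := by
  unfold signVector
  split_ifs <;> simp

lemma two_smul_sum_filter_sub_sum {ι M : Type*} [Fintype ι] [DecidableEq ι] [AddCommGroup M]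
    [Module ℂ M] (G : (ι → Fin 2) → M) (i : ι) :
    (2 : ℂ) • ∑ η ∈ univ.filter (fun η : ι → Fin 2 => η i = 0), G η - ∑ η, G η
      = ∑ η, (signVector η i : ℂ) • G η := by
  have hterm : ∀ η : ι → Fin 2, (signVector η i : ℂ) • G η
      = (if η i = 0 then (2 : ℂ) • G η else 0) - G η := by
    intro η
    unfold signVector
    split_ifs <;> module
  simp only [hterm, sum_sub_distrib, ← sum_filter, smul_sum]

lemma one_sub_sum_kronecker_eq_sum_kronecker {R κ ι l m : Type*} [CommRing R]
    [Fintype κ] [Fintype ι] [DecidableEq l] [DecidableEq m]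
    {A : κ → Matrix l l R} (hA : ∑ k, A k = 1) (c : κ → ι → R) (X : ι → Matrix m m R) :
    1 - ∑ i, (∑ k, c k i • A k) ⊗ₖ X i = ∑ k, A k ⊗ₖ (1 - ∑ i, c k i • X i) := by
  rw [← one_kronecker_one, ← hA]
  ext ⟨a, b⟩ ⟨a', b'⟩
  simp only [Matrix.sub_apply, Matrix.sum_apply, kronecker_apply, Matrix.smul_apply, smul_eq_mul,
    mul_sub, sum_mul, mul_sum, sum_sub_distrib]
  rw [sum_comm]
  congr 1
  exact sum_congr rfl fun _ _ => sum_congr rfl fun _ _ => by ring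

theorem stmt_16_general {d n g : ℕ}
    (E : Fin g → Matrix (Fin d) (Fin d) ℂ)
    (G : (Fin g → Fin 2) → Matrix (Fin d) (Fin d) ℂ)
    (hGpos : ∀ η, (G η).PosSemidef) (hGsum : ∑ η, G η = 1)
    (hmarg : ∀ i, E i = ∑ η ∈ Finset.univ.filter (fun η : Fin g → Fin 2 => η i = 0), G η)
    (X : Fin g → Matrix (Fin n) (Fin n) ℂ)
    (hwit : ∀ ε : Fin g → ℝ, (∀ i, ε i = 1 ∨ ε i = -1) →
      ((1 : Matrix (Fin n) (Fin n) ℂ) - ∑ i, ((ε i : ℝ) : ℂ) • X i).PosSemidef) :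
    ((1 : Matrix (Fin d × Fin n) (Fin d × Fin n) ℂ)
      - ∑ i, ((2 : ℂ) • E i - 1) ⊗ₖ X i).PosSemidef := by
  have hsign : ∀ i, (2 : ℂ) • E i - 1 = ∑ η, (signVector η i : ℂ) • G η := fun i => by
    rw [hmarg i, ← hGsum]
    exact two_smul_sum_filter_sub_sum G i
  simp only [hsign]
  rw [one_sub_sum_kronecker_eq_sum_kronecker hGsum]
  exact posSemidef_sum _ fun η _ =>
    (hGpos η).kronecker (hwit _ (signVector_eq_one_or_neg_one η))

/-- If the effects `E₁, …, E_g` are jointly measurable with joint POVM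
`{G_η}_{η∈{0,1}^g}`, then every incompatibility witness `(X₁,…,X_g)` (a tuple of
self-adjoint matrices with `∑ᵢ εᵢXᵢ ≤ I` for all sign vectors `ε`) satisfies
`∑ᵢ (2Eᵢ - I) ⊗ Xᵢ ≤ I`. -/
theorem stmt_16 {d n g : ℕ}
    (E : Fin g → Matrix (Fin d) (Fin d) ℂ)
    (hE : ∀ i, (E i).PosSemidef ∧ ((1 : Matrix (Fin d) (Fin d) ℂ) - E i).PosSemidef)
    (G : (Fin g → Fin 2) → Matrix (Fin d) (Fin d) ℂ)
    (hGpos : ∀ η, (G η).PosSemidef) (hGsum : ∑ η, G η = 1)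
    (hmarg : ∀ i, E i = ∑ η ∈ Finset.univ.filter (fun η : Fin g → Fin 2 => η i = 0), G η)
    (X : Fin g → Matrix (Fin n) (Fin n) ℂ) (hX : ∀ i, (X i).IsHermitian)
    (hwit : ∀ ε : Fin g → ℝ, (∀ i, ε i = 1 ∨ ε i = -1) →
      ((1 : Matrix (Fin n) (Fin n) ℂ) - ∑ i, ((ε i : ℝ) : ℂ) • X i).PosSemidef) :
    ((1 : Matrix (Fin d × Fin n) (Fin d × Fin n) ℂ)
      - ∑ i, ((2 : ℂ) • E i - 1) ⊗ₖ X i).PosSemidef :=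
  stmt_16_general E G hGpos hGsum hmarg X hwit
end

section
/- Let {G_η}_{η ∈ [k_1]×…×[k_g]} be a POVM on ℂ^d (G_η ≥ 0, Σ_η G_η = I) with marginals E^{(i)}_j = Σ_{η: η_i = j} G_η. Then for any tuple (X_{i,j}) of self-adjoint n×n matrices, i ∈ [g], j ∈ [k_i - 1], satisfying Σ_{i=1}^g Σ_{j=1}^{k_i-1} v^{(k_i)}_j(η_i) X_{i,j} ≤ I_n for every η ∈ [k_1]×…×[k_g] (where v^{(k)}_j(ε) = -2/k + 2δ_{ε,j}), it holds that Σ_{i=1}^g Σ_{j=1}^{k_i-1} (2E^{(i)}_j - (2/k_i)I_d) ⊗ X_{i,j} ≤ I_{dn}. -/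
open Matrix Kronecker
open scoped ComplexOrder

/-! Expanding `2E⁽ⁱ⁾_j - (2/kᵢ)I = ∑_η v⁽ᵏⁱ⁾_j(η_i) G_η` and using `∑_η G_η = I`, the operator
`I - ∑ᵢ∑ⱼ (2E⁽ⁱ⁾_j - (2/kᵢ)I) ⊗ X_{i,j}` becomes `∑_η G_η ⊗ (I - ∑ᵢ∑ⱼ v⁽ᵏⁱ⁾_j(η_i) X_{i,j})`,
a sum of Kronecker products of positive semidefinite matrices. -/

namespace Matrix

variable {l m p q ι α : Type*}

theorem sum_kronecker [NonUnitalNonAssocSemiring α] (s : Finset ι) (A : ι → Matrix l m α)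
    (B : Matrix p q α) : (∑ i ∈ s, A i) ⊗ₖ B = ∑ i ∈ s, A i ⊗ₖ B := by
  ext; simp [Matrix.sum_apply, Finset.sum_mul]

theorem kronecker_sum [NonUnitalNonAssocSemiring α] (s : Finset ι) (A : Matrix l m α)
    (B : ι → Matrix p q α) : A ⊗ₖ (∑ i ∈ s, B i) = ∑ i ∈ s, A ⊗ₖ B i := by
  ext; simp [Matrix.sum_apply, Finset.mul_sum]

theorem kronecker_sub [NonUnitalNonAssocRing α] (A : Matrix l m α) (B C : Matrix p q α) :
    A ⊗ₖ (B - C) = A ⊗ₖ B - A ⊗ₖ C := by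
  ext; simp [mul_sub]

theorem sum_sum_sum_smul_kronecker [CommSemiring α] [Fintype ι] {τ : Type*} [Fintype τ]
    {κ : τ → Type*} [∀ i, Fintype (κ i)] (G : ι → Matrix l m α) (c : ι → ∀ i, κ i → α)
    (X : ∀ i, κ i → Matrix p q α) :
    ∑ i, ∑ j, (∑ η, c η i j • G η) ⊗ₖ X i j = ∑ η, G η ⊗ₖ ∑ i, ∑ j, c η i j • X i j := by
  simp_rw [sum_kronecker, kronecker_sum, smul_kronecker, kronecker_smul]
  rw [Finset.sum_comm]
  refine Finset.sum_congr rfl fun i _ => ?_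
  rw [Finset.sum_comm]

variable [Fintype ι] {d n : Type*} [DecidableEq d] {G : ι → Matrix d d ℂ}

theorem posSemidef_one_sub_sum_kronecker [Fintype d] [Fintype n] [DecidableEq n]
    (hGpos : ∀ η, (G η).PosSemidef) (hGsum : ∑ η, G η = 1)
    {Y : ι → Matrix n n ℂ} (hY : ∀ η, (1 - Y η).PosSemidef) :
    (1 - ∑ η, G η ⊗ₖ Y η).PosSemidef := by
  have hsplit : ∑ η, G η ⊗ₖ (1 - Y η) = 1 - ∑ η, G η ⊗ₖ Y η := by
    simp_rw [kronecker_sub, Finset.sum_sub_distrib, ← sum_kronecker, hGsum, one_kronecker_one]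
  rw [← hsplit]
  exact posSemidef_sum _ fun η _ => (hGpos η).kronecker (hY η)

theorem two_smul_sum_filter_sub_smul_one (hGsum : ∑ η, G η = 1) (P : ι → Prop) [DecidablePred P]
    (t : ℝ) :
    (2 : ℂ) • ∑ η ∈ Finset.univ.filter P, G η - ((2 / t : ℝ) : ℂ) • 1
      = ∑ η, (((-2 / t + if P η then 2 else 0 : ℝ)) : ℂ) • G η := by
  have hcoeff : ∀ η, (((-2 / t + if P η then 2 else 0 : ℝ)) : ℂ)
      = (if P η then 2 else 0) - ((2 / t : ℝ) : ℂ) := by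
    intro η; split_ifs <;> push_cast <;> ring
  simp_rw [hcoeff, sub_smul, Finset.sum_sub_distrib, ite_smul, zero_smul, ← Finset.sum_filter,
    ← Finset.smul_sum, hGsum]

end Matrix

theorem stmt_17_general {d n g : ℕ} (k : Fin g → ℕ)
    (G : (∀ i : Fin g, Fin (k i)) → Matrix (Fin d) (Fin d) ℂ)
    (hGpos : ∀ η, (G η).PosSemidef) (hGsum : ∑ η, G η = 1)
    (X : ∀ i : Fin g, Fin (k i - 1) → Matrix (Fin n) (Fin n) ℂ)
    (hwit : ∀ η : ∀ i : Fin g, Fin (k i),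
      ((1 : Matrix (Fin n) (Fin n) ℂ)
        - ∑ i, ∑ j : Fin (k i - 1),
            (((-2 / (k i) + if ((η i : ℕ) = (j : ℕ)) then 2 else 0 : ℝ)) : ℂ) • X i j
        ).PosSemidef) :
    ((1 : Matrix (Fin d × Fin n) (Fin d × Fin n) ℂ)
      - ∑ i, ∑ j : Fin (k i - 1),
          ((2 : ℂ) • (∑ η ∈ Finset.univ.filter
              (fun η : ∀ i : Fin g, Fin (k i) => (η i : ℕ) = (j : ℕ)), G η)
            - ((2 / (k i) : ℝ) : ℂ) • 1) ⊗ₖ X i j).PosSemidef := by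
  simp_rw [two_smul_sum_filter_sub_smul_one hGsum, sum_sum_sum_smul_kronecker]
  exact posSemidef_one_sub_sum_kronecker hGpos hGsum hwit

/-- If `{G_η}` is a POVM on `ℂ^d` indexed by `[k₁]×…×[k_g]` with marginals
`E⁽ⁱ⁾_j = ∑_{η : η_i = j} G_η`, then every element `X` of the matrix jewel
`D_{jewel,(k₁,…,k_g)}(n)` (i.e. satisfying the scalar inequalities indexed by `η`,
with `v⁽ᵏ⁾_j(ε) = -2/k + 2δ_{ε,j}`) satisfies
`∑ᵢ∑ⱼ (2E⁽ⁱ⁾_j - (2/kᵢ)I) ⊗ X_{i,j} ≤ I_{dn}`. -/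
theorem stmt_17 {d n g : ℕ} (k : Fin g → ℕ)
    (G : (∀ i : Fin g, Fin (k i)) → Matrix (Fin d) (Fin d) ℂ)
    (hGpos : ∀ η, (G η).PosSemidef) (hGsum : ∑ η, G η = 1)
    (X : ∀ i : Fin g, Fin (k i - 1) → Matrix (Fin n) (Fin n) ℂ)
    (hX : ∀ i j, (X i j).IsHermitian)
    (hwit : ∀ η : ∀ i : Fin g, Fin (k i),
      ((1 : Matrix (Fin n) (Fin n) ℂ)
        - ∑ i, ∑ j : Fin (k i - 1),
            (((-2 / (k i) + if ((η i : ℕ) = (j : ℕ)) then 2 else 0 : ℝ)) : ℂ) • X i j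
        ).PosSemidef) :
    ((1 : Matrix (Fin d × Fin n) (Fin d × Fin n) ℂ)
      - ∑ i, ∑ j : Fin (k i - 1),
          ((2 : ℂ) • (∑ η ∈ Finset.univ.filter
              (fun η : ∀ i : Fin g, Fin (k i) => (η i : ℕ) = (j : ℕ)), G η)
            - ((2 / (k i) : ℝ) : ℂ) • 1) ⊗ₖ X i j).PosSemidef :=
  stmt_17_general k G hGpos hGsum X hwit
end
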